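/- The function μ₅ satisfies μ₅ n ≥ 0 for all n, μ₅ is positive definite on ℤ/5ℤ, and ∑_{n ∈ ZMod 5} V₅ n * μ₅ n = 2 - √5 < 0. -/

import Mathlib

open Finset
open scoped ComplexOrder

/-- The potential `V₅` on `ZMod 5`: `V₅ 0 = V₅ 2 = V₅ 3 = 1`, `V₅ 1 = V₅ 4 = -1`. -/
def V₅ : ZMod 5 → ℝ := fun n => if n = 1 ∨ n = 4 then -1 else 1

/-- `μ₅ 0 = 1`, `μ₅ 1 = μ₅ 4 = (√5 - 1)/2`, `μ₅ 2 = μ₅ 3 = 0`. -/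
noncomputable def μ₅ : ZMod 5 → ℝ := fun n =>
  if n = 0 then 1 else if n = 1 ∨ n = 4 then (Real.sqrt 5 - 1) / 2 else 0

/-- A real-valued function on an additive abelian group is positive definite if all its
"quadratic forms" with complex coefficients are real and nonnegative. -/
def IsPosDef {G : Type*} [AddCommGroup G] (g : G → ℝ) : Prop :=
  ∀ (N : ℕ) (x : Fin N → G) (c : Fin N → ℂ),
    0 ≤ ∑ i, ∑ j, c i * (starRingEnd ℂ) (c j) * (g (x i - x j) : ℂ)

/-!
With `ψ n = exp (2πi n / 5)`, the values `cos (2π/5) = (√5 - 1)/4` and `cos (4π/5) = -(1 + √5)/4`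
give `μ₅ = √5/5 + (5 - √5)/10 (ψ + ψ⁻¹)`, so the Fourier coefficients of `μ₅` are nonnegative.
A nonnegative combination `∑ₖ aₖ ψₖ` of characters is positive definite, because its quadratic
form is `∑ₖ aₖ |∑ᵢ cᵢ ψₖ(xᵢ)|²`.
-/

open ComplexConjugate

theorem isPosDef_of_ofReal_eq_sum_addChar {G ι : Type*} [AddCommGroup G] [Finite G] [Fintype ι]
    {g : G → ℝ} (a : ι → ℝ) (ha : ∀ k, 0 ≤ a k) (ψ : ι → AddChar G ℂ)
    (hg : ∀ x, (g x : ℂ) = ∑ k, a k * ψ k x) : IsPosDef g := by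
  intro N x c
  have hform : ∑ i, ∑ j, c i * conj (c j) * (g (x i - x j) : ℂ)
      = ∑ k, a k * ((∑ i, c i * ψ k (x i)) * conj (∑ i, c i * ψ k (x i))) := by
    simp_rw [hg, sub_eq_add_neg, AddChar.map_add_eq_mul, AddChar.map_neg_eq_conj, map_sum,
      map_mul, sum_mul_sum, mul_sum]
    exact (sum_congr rfl fun i _ => sum_comm).trans <| sum_comm.trans <|
      sum_congr rfl fun k _ => sum_congr rfl fun i _ => sum_congr rfl fun j _ => by ring
  rw [hform]
  refine sum_nonneg fun k _ => mul_nonneg (by exact_mod_cast ha k) ?_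
  rw [Complex.mul_conj]
  exact_mod_cast Complex.normSq_nonneg _

theorem isPosDef_of_eq_add_mul_re_addChar {G : Type*} [AddCommGroup G] [Finite G] {g : G → ℝ}
    {a b : ℝ} (ha : 0 ≤ a) (hb : 0 ≤ b) (ψ : AddChar G ℂ) (hg : ∀ x, g x = a + b * (ψ x).re) :
    IsPosDef g := by
  refine isPosDef_of_ofReal_eq_sum_addChar ![a, b / 2, b / 2] ?_ ![1, ψ, ψ⁻¹] fun x => ?_
  · intro k
    fin_cases k <;> simp [ha, div_nonneg hb zero_le_two]
  · simp only [Fin.sum_univ_three, hg, Matrix.cons_val_zero, Matrix.cons_val_one,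
      Matrix.cons_val_two, Matrix.head_cons, Matrix.tail_cons, AddChar.one_apply,
      AddChar.inv_apply', AddChar.inv_apply_eq_conj]
    rw [mul_one, add_assoc, ← mul_add, Complex.add_conj]
    push_cast
    ring

theorem ZMod.re_stdAddChar {N : ℕ} [NeZero N] (j : ZMod N) :
    (stdAddChar j).re = Real.cos (2 * Real.pi * j.val / N) := by
  rw [stdAddChar_apply, toCircle_apply, ← Complex.exp_ofReal_mul_I_re]
  congr 2
  push_cast
  ring

theorem Real.cos_two_pi_div_five : Real.cos (2 * Real.pi / 5) = (Real.sqrt 5 - 1) / 4 := by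
  have h5 : Real.sqrt 5 ^ 2 = 5 := Real.sq_sqrt (by norm_num)
  rw [show 2 * Real.pi / 5 = 2 * (Real.pi / 5) by ring, Real.cos_two_mul, Real.cos_pi_div_five]
  linear_combination h5 / 8

theorem Real.cos_four_pi_div_five : Real.cos (4 * Real.pi / 5) = -(1 + Real.sqrt 5) / 4 := by
  rw [show 4 * Real.pi / 5 = Real.pi - Real.pi / 5 by ring, Real.cos_pi_sub, Real.cos_pi_div_five]
  ring

theorem μ₅_eq_add_mul_re_stdAddChar (n : ZMod 5) :
    μ₅ n = Real.sqrt 5 / 5 + (5 - Real.sqrt 5) / 5 * (ZMod.stdAddChar n).re := by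
  have h5 : Real.sqrt 5 ^ 2 = 5 := Real.sq_sqrt (by norm_num)
  have re_one : (ZMod.stdAddChar (1 : ZMod 5)).re = (Real.sqrt 5 - 1) / 4 := by
    rw [ZMod.re_stdAddChar, ZMod.val_one'' (by norm_num), ← Real.cos_two_pi_div_five]
    norm_num
  have re_two : (ZMod.stdAddChar (2 : ZMod 5)).re = -(1 + Real.sqrt 5) / 4 := by
    rw [ZMod.re_stdAddChar, ZMod.val_ofNat_of_lt (by norm_num), ← Real.cos_four_pi_div_five]
    ring_nf
  have re_neg (j : ZMod 5) : (ZMod.stdAddChar (-j)).re = (ZMod.stdAddChar j).re := by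
    rw [AddChar.map_neg_eq_conj, Complex.conj_re]
  obtain rfl | rfl | rfl | rfl | rfl : n = 0 ∨ n = 1 ∨ n = 2 ∨ n = 3 ∨ n = 4 := by decide +revert
  all_goals simp +decide only [μ₅, if_true, if_false]
  · rw [AddChar.map_zero_eq_one, Complex.one_re]
    ring
  · rw [re_one]
    linear_combination h5 / 20
  · rw [re_two]
    linear_combination -h5 / 20
  · rw [show (3 : ZMod 5) = -2 from rfl, re_neg, re_two]
    linear_combination -h5 / 20
  · rw [show (4 : ZMod 5) = -1 from rfl, re_neg, re_one]
    linear_combination h5 / 20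

theorem μ₅_isPosDef : IsPosDef μ₅ := by
  have h5 : Real.sqrt 5 ≤ 5 := by nlinarith [Real.sq_sqrt (show (0 : ℝ) ≤ 5 by norm_num)]
  exact isPosDef_of_eq_add_mul_re_addChar (by positivity) (by linarith) ZMod.stdAddChar
    μ₅_eq_add_mul_re_stdAddChar

theorem μ₅_nonneg (n : ZMod 5) : 0 ≤ μ₅ n := by
  have h5 : 1 ≤ Real.sqrt 5 := Real.one_le_sqrt.2 (by norm_num)
  unfold μ₅
  split_ifs <;> linarith

theorem sum_V₅_mul_μ₅ : ∑ n : ZMod 5, V₅ n * μ₅ n = 2 - Real.sqrt 5 := by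
  rw [show ∀ f : ZMod 5 → ℝ, ∑ n, f n = f 0 + f 1 + f 2 + f 3 + f 4 from Fin.sum_univ_five]
  simp +decide only [V₅, μ₅, if_true, if_false]
  ring

theorem μ₅_properties :
    (∀ n, 0 ≤ μ₅ n) ∧ IsPosDef μ₅ ∧
    (∑ n : ZMod 5, V₅ n * μ₅ n) = 2 - Real.sqrt 5 ∧
    (∑ n : ZMod 5, V₅ n * μ₅ n) < 0 := by
  have h5 : 2 < Real.sqrt 5 := (Real.lt_sqrt zero_le_two).2 (by norm_num)
  exact ⟨μ₅_nonneg, μ₅_isPosDef, sum_V₅_mul_μ₅, sum_V₅_mul_μ₅ ▸ sub_neg.2 h5⟩
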